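/- arXiv:2106.10376 — 4 statements merged into one kernel-verified Lean document; each statement's English description precedes it below -/
import Mathlib

section
/- For all integers m,n ≥ 2, the grid graph G_{m,n} has the strict 1-density property: every subgraph H of G_{m,n} that is vertex-induced, connected, has at least one edge, and satisfies H ≠ G_{m,n}, obeys θ(H) < θ(G_{m,n}). -/
/-!
Let `S` have `s` vertices meeting `r` rows and `c` columns. Counting each horizontal edge of `S`
by its left endpoint misses the rightmost vertex of `S` in every row, so `S` spans at most
`s - r` horizontal and, likewise, `s - c` vertical edges; the whole grid has `2mn - m - n`.
Since `s ≤ rc`, `r ≤ m` and `c ≤ n`, the difference of the cross-multiplied densities is a sum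
of three nonnegative products, one of which is positive unless `S` is the whole grid.
-/

open scoped Classical

noncomputable section

/-- The `m`-by-`n` grid graph: vertices are pairs in `Fin m × Fin n`, and two vertices
are adjacent iff they agree in one coordinate and differ by exactly one in the other
(the box product of two path graphs). -/
def gridGraph (m n : ℕ) : SimpleGraph (Fin m × Fin n) :=
  SimpleGraph.fromRel fun v w =>
    (v.1 = w.1 ∧ v.2.val + 1 = w.2.val) ∨ (v.2 = w.2 ∧ v.1.val + 1 = w.1.val)

variable {V : Type*} [Fintype V] [DecidableEq V]

/-- Edges of `G` with both endpoints in `S`: the edge set of the vertex-induced subgraph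
of `G` on `S`. -/
def inducedEdges (G : SimpleGraph V) (S : Finset V) : Finset (Sym2 V) :=
  G.edgeFinset.filter fun e => ∀ v ∈ e, v ∈ S

/-- The 1-density `θ(H) = |E(H)|/(|V(H)|-1)` of the vertex-induced subgraph of `G`
on the vertex set `S`. -/
def density (G : SimpleGraph V) (S : Finset V) : ℝ :=
  ((inducedEdges G S).card : ℝ) / ((S.card : ℝ) - 1)

open Finset

section Fibres

variable {α ι β : Type*} [DecidableEq ι] [LinearOrder β]

/-- The `g`-largest element of each fibre of `f` in `S` lies outside `P`. -/
theorem Finset.card_add_card_image_le_of_forall_exists_lt {S P : Finset α} (f : α → ι)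
    (g : α → β) (hPS : P ⊆ S) (hP : ∀ v ∈ P, ∃ w ∈ S, f w = f v ∧ g v < g w) :
    #P + #(S.image f) ≤ #S := by
  have hfibre : ∀ i ∈ S.image f, #{v ∈ P | f v = i} + 1 ≤ #{v ∈ S | f v = i} := by
    intro i hi
    obtain ⟨u, hu, rfl⟩ := mem_image.1 hi
    obtain ⟨x, hx, hmax⟩ := exists_max_image {v ∈ S | f v = f u} g ⟨u, by simp [hu]⟩
    refine card_lt_card ((ssubset_iff_of_subset (filter_subset_filter _ hPS)).2 ⟨x, hx, ?_⟩)
    intro hxP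
    obtain ⟨w, hw, hfw, hlt⟩ := hP x (mem_filter.1 hxP).1
    exact (hmax w (mem_filter.2 ⟨hw, hfw.trans (mem_filter.1 hx).2⟩)).not_gt hlt
  calc #P + #(S.image f) = ∑ i ∈ S.image f, (#{v ∈ P | f v = i} + 1) := by
        rw [sum_add_distrib, card_eq_sum_card_fiberwise fun v hv => mem_image_of_mem f (hPS hv)]
        simp
    _ ≤ ∑ i ∈ S.image f, #{v ∈ S | f v = i} := sum_le_sum hfibre
    _ = #S := (card_eq_sum_card_image f S).symm

theorem Finset.card_filter_product_add_card_image_le [DecidableEq α] (S : Finset α)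
    (r : α → α → Prop) [DecidableRel r] (f : α → ι) (g : α → β)
    (hr : ∀ v w, r v w → f w = f v ∧ g v < g w)
    (hfun : ∀ v w w', r v w → r v w' → w = w') :
    #{p ∈ S ×ˢ S | r p.1 p.2} + #(S.image f) ≤ #S := by
  have hinj :
      Set.InjOn Prod.fst (({p ∈ S ×ˢ S | r p.1 p.2} : Finset (α × α)) : Set (α × α)) := by
    rintro ⟨v, w⟩ hvw ⟨v', w'⟩ hvw' (rfl : v = v')
    simp only [coe_filter, mem_product] at hvw hvw'
    rw [hfun v w w' hvw.2 hvw'.2]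
  rw [← card_image_of_injOn hinj]
  refine card_add_card_image_le_of_forall_exists_lt f g ?_ ?_
  · intro v hv
    obtain ⟨p, hp, rfl⟩ := mem_image.1 hv
    exact (mem_product.1 (mem_filter.1 hp).1).1
  · intro v hv
    obtain ⟨⟨v, w⟩, hp, rfl⟩ := mem_image.1 hv
    obtain ⟨hvw, hrvw⟩ := mem_filter.1 hp
    exact ⟨w, (mem_product.1 hvw).2, hr v w hrvw⟩

end Fibres

section InducedEdges

variable {α : Type*} [Fintype α] [DecidableEq α]

theorem one_lt_card_of_mem_inducedEdges {G : SimpleGraph α} {S : Finset α} {e : Sym2 α}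
    (he : e ∈ inducedEdges G S) : 1 < #S := by
  induction e using Sym2.ind with
  | _ x y =>
    obtain ⟨hxy, hS⟩ := mem_filter.1 he
    exact one_lt_card.2 ⟨x, hS x (Sym2.mem_mk_left x y), y, hS y (Sym2.mem_mk_right x y),
      (SimpleGraph.mem_edgeFinset.1 hxy).ne⟩

/-- For an asymmetric relation `r`, every edge of `fromRel r` is `s(v, w)` for exactly one
pair with `r v w`. -/
theorem card_inducedEdges_fromRel (r : α → α → Prop) [DecidableRel r]
    (hr : ∀ v w, r v w → ¬ r w v) (S : Finset α) :
    #(inducedEdges (SimpleGraph.fromRel r) S) = #{p ∈ S ×ˢ S | r p.1 p.2} := by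
  have himage : inducedEdges (SimpleGraph.fromRel r) S =
      ({p ∈ S ×ˢ S | r p.1 p.2} : Finset (α × α)).image fun p => s(p.1, p.2) := by
    ext e
    induction e using Sym2.ind with
    | _ x y =>
      simp only [inducedEdges, mem_filter, SimpleGraph.mem_edgeFinset, SimpleGraph.mem_edgeSet,
        SimpleGraph.fromRel_adj, Sym2.forall_mem_pair, mem_image, mem_product, Prod.exists,
        Sym2.eq_iff]
      constructor
      · rintro ⟨⟨-, hxy | hyx⟩, hx, hy⟩
        · exact ⟨x, y, ⟨⟨hx, hy⟩, hxy⟩, Or.inl ⟨rfl, rfl⟩⟩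
        · exact ⟨y, x, ⟨⟨hy, hx⟩, hyx⟩, Or.inr ⟨rfl, rfl⟩⟩
      · rintro ⟨a, b, ⟨⟨ha, hb⟩, hab⟩, ⟨rfl, rfl⟩ | ⟨rfl, rfl⟩⟩
        · exact ⟨⟨fun h => hr _ _ hab (h ▸ hab), Or.inl hab⟩, ha, hb⟩
        · exact ⟨⟨fun h => hr _ _ hab (h ▸ hab), Or.inr hab⟩, hb, ha⟩
  rw [himage, card_image_of_injOn]
  rintro ⟨a, b⟩ hab ⟨c, d⟩ hcd h
  simp only [coe_filter, mem_product] at hab hcd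
  rcases Sym2.eq_iff.1 h with ⟨rfl, rfl⟩ | ⟨rfl, rfl⟩
  · rfl
  · exact (hr _ _ hab.2 hcd.2).elim

end InducedEdges

/-- An `s`-vertex subset of a grid meeting `r` rows and `c` columns spans at most `2s - r - c`
edges, so this bounds its density. -/
def gridDensityBound (s r c : ℝ) : ℝ := (2 * s - r - c) / (s - 1)

theorem gridDensityBound_lt {m n r c s : ℝ} (hm : 1 < m) (hn : 1 < n) (hr : 1 ≤ r)
    (hrm : r ≤ m) (hc : 1 ≤ c) (hcn : c ≤ n) (hs : 1 < s) (hsrc : s ≤ r * c)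
    (hsmn : s < m * n) :
    gridDensityBound s r c < gridDensityBound (m * n) m n := by
  rw [gridDensityBound, gridDensityBound, div_lt_div_iff₀ (by linarith) (by nlinarith)]
  have hdiff : (2 * (m * n) - m - n) * (s - 1) - (2 * s - r - c) * (m * n - 1) =
      (m - 1) * (r - 1) * (n - c) + (n - 1) * (c - 1) * (m - r) + (m + n - 2) * (r * c - s) := by
    ring
  have h₁ : 0 ≤ (m - 1) * (r - 1) * (n - c) := by
    apply mul_nonneg (mul_nonneg _ _) _ <;> linarith
  have h₂ : 0 ≤ (n - 1) * (c - 1) * (m - r) := by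
    apply mul_nonneg (mul_nonneg _ _) _ <;> linarith
  have h₃ : 0 ≤ (m + n - 2) * (r * c - s) := by
    apply mul_nonneg _ _ <;> linarith
  rcases hsrc.lt_or_eq with hsrc | hsrc
  · have : 0 < (m + n - 2) * (r * c - s) := by apply mul_pos <;> linarith
    linarith
  rcases hr.lt_or_eq with hr | rfl
  · rcases hcn.lt_or_eq with hcn | hcn
    · have : 0 < (m - 1) * (r - 1) * (n - c) := by apply mul_pos (mul_pos _ _) _ <;> linarith
      linarith
    · have hrm : r < m := by
        rw [hsrc, ← hcn] at hsmn
        exact lt_of_mul_lt_mul_right hsmn (by linarith)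
      have : 0 < (n - 1) * (c - 1) * (m - r) := by apply mul_pos (mul_pos _ _) _ <;> linarith
      linarith
  · have : 0 < (n - 1) * (c - 1) * (m - 1) := by apply mul_pos (mul_pos _ _) _ <;> linarith
    linarith

namespace gridGraph

variable {m n : ℕ}

def RowSucc (v w : Fin m × Fin n) : Prop := v.1 = w.1 ∧ v.2.val + 1 = w.2.val

def ColSucc (v w : Fin m × Fin n) : Prop := v.2 = w.2 ∧ v.1.val + 1 = w.1.val

theorem card_inducedEdges (S : Finset (Fin m × Fin n)) :
    #(inducedEdges (gridGraph m n) S) =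
      #{p ∈ S ×ˢ S | RowSucc p.1 p.2} + #{p ∈ S ×ˢ S | ColSucc p.1 p.2} := by
  rw [show gridGraph m n = SimpleGraph.fromRel fun v w => RowSucc v w ∨ ColSucc v w from rfl,
    card_inducedEdges_fromRel, filter_or, card_union_of_disjoint]
  · refine disjoint_filter.2 fun p _ hrow hcol => ?_
    have h₁ := congrArg Fin.val hrow.1
    have h₂ := hcol.2
    omega
  · rintro v w (⟨h₁, h₂⟩ | ⟨h₁, h₂⟩) (⟨h₃, h₄⟩ | ⟨h₃, h₄⟩) <;> omega

theorem card_inducedEdges_add_card_rows_add_card_cols_le (S : Finset (Fin m × Fin n)) :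
    #(inducedEdges (gridGraph m n) S) + #(S.image Prod.fst) + #(S.image Prod.snd) ≤ 2 * #S := by
  have hrows := card_filter_product_add_card_image_le S RowSucc Prod.fst (fun v => v.2)
    (fun v w h => ⟨h.1.symm, Fin.lt_def.2 (h.2 ▸ Nat.lt_succ_self _)⟩)
    (fun v w w' h h' => Prod.ext (h.1.symm.trans h'.1) (Fin.ext (h.2.symm.trans h'.2)))
  have hcols := card_filter_product_add_card_image_le S ColSucc Prod.snd (fun v => v.1)
    (fun v w h => ⟨h.1.symm, Fin.lt_def.2 (h.2 ▸ Nat.lt_succ_self _)⟩)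
    (fun v w w' h h' => Prod.ext (Fin.ext (h.2.symm.trans h'.2)) (h.1.symm.trans h'.1))
  rw [card_inducedEdges]
  omega

theorem le_card_inducedEdges_univ :
    m * (n - 1) + (m - 1) * n ≤ #(inducedEdges (gridGraph m n) univ) := by
  rw [card_inducedEdges, univ_product_univ]
  gcongr
  · have := card_le_card_of_injOn (s := (univ : Finset (Fin m × Fin (n - 1))))
      (t := {p : (Fin m × Fin n) × (Fin m × Fin n) | RowSucc p.1 p.2})
      (fun p => ((p.1, ⟨p.2, by omega⟩), (p.1, ⟨p.2 + 1, by omega⟩)))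
      (fun p _ => mem_filter.2 ⟨mem_univ _, rfl, rfl⟩)
      (fun p _ q _ h => by simp_all [Prod.ext_iff, Fin.ext_iff])
    simpa using this
  · have := card_le_card_of_injOn (s := (univ : Finset (Fin (m - 1) × Fin n)))
      (t := {p : (Fin m × Fin n) × (Fin m × Fin n) | ColSucc p.1 p.2})
      (fun p => ((⟨p.1, by omega⟩, p.2), (⟨p.1 + 1, by omega⟩, p.2)))
      (fun p _ => mem_filter.2 ⟨mem_univ _, rfl, rfl⟩)
      (fun p _ q _ h => by simp_all [Prod.ext_iff, Fin.ext_iff])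
    simpa using this

theorem density_le_gridDensityBound {S : Finset (Fin m × Fin n)} (hS : 1 < #S) :
    density (gridGraph m n) S ≤ gridDensityBound #S #(S.image Prod.fst) #(S.image Prod.snd) := by
  have hE := (Nat.cast_le (α := ℝ)).2 (card_inducedEdges_add_card_rows_add_card_cols_le S)
  push_cast at hE
  unfold density gridDensityBound
  gcongr
  · exact sub_nonneg.2 (by exact_mod_cast hS.le)
  · linarith

theorem gridDensityBound_le_density_univ (hm : 1 ≤ m) (hn : 1 ≤ n) :
    gridDensityBound (m * n) m n ≤ density (gridGraph m n) univ := by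
  have hE := (Nat.cast_le (α := ℝ)).2 (le_card_inducedEdges_univ (m := m) (n := n))
  push_cast [Nat.cast_sub hm, Nat.cast_sub hn] at hE
  simp only [density, gridDensityBound, card_univ, Fintype.card_prod, Fintype.card_fin,
    Nat.cast_mul]
  gcongr
  · exact sub_nonneg.2 (by exact_mod_cast Nat.one_le_iff_ne_zero.2 (by positivity))
  · linarith

end gridGraph

/-- for `m, n ≥ 2` the grid graph `G_{m,n}` has the strict 1-density
property: every vertex-induced subgraph `H` (given by its vertex set `S`) that is
connected, has at least one edge, and is not all of `G_{m,n}` satisfies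
`θ(H) < θ(G_{m,n})`. -/
theorem gridGraph_strict_density (m n : ℕ) (hm : 2 ≤ m) (hn : 2 ≤ n) :
    ∀ S : Finset (Fin m × Fin n),
      (inducedEdges (gridGraph m n) S).Nonempty →
      ((gridGraph m n).induce (↑S : Set (Fin m × Fin n))).Connected →
      S ≠ Finset.univ →
      density (gridGraph m n) S < density (gridGraph m n) Finset.univ := by
  intro S ⟨e, he⟩ _ hS
  have hs : 1 < #S := one_lt_card_of_mem_inducedEdges he
  have hSne : S.Nonempty := card_pos.1 (by omega)
  have hr : 0 < #(S.image Prod.fst) := card_pos.2 (hSne.image _)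
  have hc : 0 < #(S.image Prod.snd) := card_pos.2 (hSne.image _)
  have hrm : #(S.image Prod.fst) ≤ m := (card_le_univ _).trans_eq (Fintype.card_fin m)
  have hcn : #(S.image Prod.snd) ≤ n := (card_le_univ _).trans_eq (Fintype.card_fin n)
  have hsrc : #S ≤ #(S.image Prod.fst) * #(S.image Prod.snd) :=
    (card_le_card subset_product).trans_eq (card_product _ _)
  have hsmn : #S < m * n := by simpa using card_lt_card (ssubset_univ_iff.2 hS)
  calc density (gridGraph m n) S
      ≤ gridDensityBound #S #(S.image Prod.fst) #(S.image Prod.snd) :=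
        gridGraph.density_le_gridDensityBound hs
    _ < gridDensityBound (m * n) m n := by apply gridDensityBound_lt <;> assumption_mod_cast
    _ ≤ density (gridGraph m n) univ :=
        gridGraph.gridDensityBound_le_density_univ (by omega) (by omega)
end
end

section
/- Let G be a finite connected simple graph and let H₀ be a minimal 1-densest subgraph of G with H₀ ≠ G. Then H₀ has the restriction property with respect to G: for every fair tree γ of G, the set γ ∩ E(H₀) of edges of γ that join two vertices of H₀ is a spanning tree of H₀ (a connected acyclic subgraph of H₀ containing all vertices of H₀). -/
open scoped Classical

noncomputable section

variable {V : Type*} [Fintype V] [DecidableEq V]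

/-- `T` is (the edge set of) a spanning tree of the vertex-induced subgraph of `G`
on the vertex set `S`: its edges are edges of `G` with both endpoints in `S`,
it is acyclic, and every two vertices of `S` are joined by a path using edges of `T`. -/
def IsSpanningTreeOn (G : SimpleGraph V) (S : Finset V) (T : Finset (Sym2 V)) : Prop :=
  (↑T : Set (Sym2 V)) ⊆ G.edgeSet ∧ (∀ e ∈ T, ∀ v ∈ e, v ∈ S) ∧
    (SimpleGraph.fromEdgeSet (↑T : Set (Sym2 V))).IsAcyclic ∧
    ∀ u ∈ S, ∀ w ∈ S, (SimpleGraph.fromEdgeSet (↑T : Set (Sym2 V))).Reachable u w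

/-- A probability mass function on the spanning trees of the induced subgraph of `G` on `S`. -/
structure TreePMFOn (G : SimpleGraph V) (S : Finset V) where
  toFun : Finset (Sym2 V) → ℝ
  nonneg : ∀ T, 0 ≤ toFun T
  supp : ∀ T, toFun T ≠ 0 → IsSpanningTreeOn G S T
  sum_one : ∑ T : Finset (Sym2 V), toFun T = 1

/-- Edge probability `η_μ(e)`. -/
def edgeProbOn {G : SimpleGraph V} {S : Finset V} (μ : TreePMFOn G S) (e : Sym2 V) : ℝ :=
  ∑ T : Finset (Sym2 V), if e ∈ T then μ.toFun T else 0

/-- Variance of the edge probabilities of `μ` over the edges within `S`. -/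
def edgeVarOn {G : SimpleGraph V} {S : Finset V} (μ : TreePMFOn G S) : ℝ :=
  (∑ e ∈ inducedEdges G S, (edgeProbOn μ e) ^ 2) / ((inducedEdges G S).card : ℝ) -
    ((∑ e ∈ inducedEdges G S, edgeProbOn μ e) / ((inducedEdges G S).card : ℝ)) ^ 2

/-- A pmf is fair if it minimizes the variance of the edge probabilities. -/
def IsFairOn {G : SimpleGraph V} {S : Finset V} (μ : TreePMFOn G S) : Prop :=
  ∀ ν : TreePMFOn G S, edgeVarOn μ ≤ edgeVarOn ν

/-- A fair tree: a spanning tree in the support of some fair pmf. -/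
def IsFairTreeOn (G : SimpleGraph V) (S : Finset V) (T : Finset (Sym2 V)) : Prop :=
  ∃ μ : TreePMFOn G S, IsFairOn μ ∧ μ.toFun T ≠ 0

/-- `S` induces a member of `H(G)`: connected, vertex-induced, with at least one edge. -/
def InH (G : SimpleGraph V) (S : Finset V) : Prop :=
  (inducedEdges G S).Nonempty ∧ (G.induce (↑S : Set V)).Connected

/-- `S` induces a 1-densest subgraph of `G`. -/
def IsDensest (G : SimpleGraph V) (S : Finset V) : Prop :=
  InH G S ∧ ∀ S' : Finset V, InH G S' → density G S' ≤ density G S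

/-- `S` induces a minimal 1-densest subgraph of `G`. -/
def IsMinimalDensest (G : SimpleGraph V) (S : Finset V) : Prop :=
  IsDensest G S ∧ ∀ S' : Finset V, S' ⊆ S → S' ≠ S → ¬ IsDensest G S'

/-- The induced subgraph on `S` is homogeneous: some pmf on its spanning trees
has constant edge probabilities. -/
def IsHomogeneousOn (G : SimpleGraph V) (S : Finset V) : Prop :=
  ∃ μ : TreePMFOn G S, ∃ c : ℝ, ∀ e ∈ inducedEdges G S, edgeProbOn μ e = c

/-- The induced subgraph on `S` has the strict 1-density property. -/
def StrictDensityOn (G : SimpleGraph V) (S : Finset V) : Prop :=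
  ∀ S' : Finset V, S' ⊆ S → InH G S' → S' ≠ S → density G S' < density G S

/-!
Write `η` for the edge probabilities of a fair pmf `μ` on the spanning trees of `G`. Every tree
meets `E(S)` in a forest, so `∑_{E(S)} η ≤ |S| - 1`; once equality is known, every tree in the
support of `μ` has exactly `|S| - 1` edges inside `S`, and an acyclic set of `|S| - 1` edges
inside `S` is a spanning tree of `S`.

For the reverse inequality let `e` minimize `η` on `E(S)` and let `A` be the set of edges with
`η ≤ η(e)`. Fairness forbids exchanging a tree edge for a strictly less likely non-tree edge
(shifting a little mass to the exchanged tree would lower the variance), so every tree of the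
support connects, inside `A`, the two ends of each edge of `A`. Hence on the component `W` of `e`
in `A` each such tree has at least `|W| - 1` edges of `A`, and averaging gives
`|W| - 1 ≤ η(e) |E(W)|`. Since `θ(W) ≤ θ(S)`, this yields
`|S| - 1 ≤ η(e) |E(S)| ≤ ∑_{E(S)} η`.
-/

open Finset SimpleGraph

namespace SimpleGraph

section Forests

variable {α : Type*} [Fintype α] {H : SimpleGraph α} [Fintype H.edgeSet]

theorem IsAcyclic.card_edgeFinset_add_one_le [Nonempty α] (h : H.IsAcyclic) :
    #H.edgeFinset + 1 ≤ Fintype.card α := by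
  obtain ⟨T, hHT, -, hT⟩ := connected_top.exists_isTree_le_of_le_of_isAcyclic le_top h
  classical
  rw [← hT.card_edgeFinset]
  gcongr

theorem IsAcyclic.isTree_of_card_edgeFinset (h : H.IsAcyclic)
    (hcard : #H.edgeFinset + 1 = Fintype.card α) : H.IsTree := by
  have : Nonempty α := Fintype.card_pos_iff.1 (by omega)
  obtain ⟨T, hHT, -, hT⟩ := connected_top.exists_isTree_le_of_le_of_isAcyclic le_top h
  classical
  have hsub : H.edgeFinset ⊆ T.edgeFinset := edgeFinset_mono hHT
  have : H.edgeFinset = T.edgeFinset :=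
    eq_of_subset_of_card_le hsub (by have := hT.card_edgeFinset; omega)
  rwa [edgeFinset_inj.1 this]

end Forests

theorem Reachable.of_forall_adj {α : Type*} {H H' : SimpleGraph α}
    (h : ∀ u v, H.Adj u v → H'.Reachable u v) {u v : α} (huv : H.Reachable u v) :
    H'.Reachable u v := by
  obtain ⟨P⟩ := huv
  induction P with
  | nil => rfl
  | cons hadj _ ih => exact (h _ _ hadj).trans ih

theorem connected_induce_setOf_reachable {α : Type*} (H : SimpleGraph α) (u : α) :
    (H.induce {v | H.Reachable u v}).Connected := by
  have : {v | H.Reachable u v} = (H.connectedComponentMk u).supp := by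
    ext v
    simp [ConnectedComponent.eq, reachable_comm]
  rw [this]
  exact ConnectedComponent.connected_toSimpleGraph _

theorem Walk.mem_of_mem_edges_fromEdgeSet {α : Type*} {s : Set (Sym2 α)} {u v : α}
    (P : (fromEdgeSet s).Walk u v) {e : Sym2 α} (he : e ∈ P.edges) : e ∈ s := by
  have := P.edges_subset_edgeSet he
  rw [edgeSet_fromEdgeSet] at this
  exact this.1

theorem IsAcyclic.not_reachable_erase_of_mem_edges {α : Type*} [DecidableEq α]
    {T : Finset (Sym2 α)} (hac : (fromEdgeSet (T : Set (Sym2 α))).IsAcyclic) {p q : α}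
    {P : (fromEdgeSet (T : Set (Sym2 α))).Walk p q} (hP : P.IsPath) {f : Sym2 α}
    (hf : f ∈ P.edges) :
    ¬(fromEdgeSet ((T.erase f : Finset (Sym2 α)) : Set (Sym2 α))).Reachable p q := by
  intro hr
  obtain ⟨Q, hQ⟩ := hr.exists_isPath
  have hle : fromEdgeSet ((T.erase f : Finset (Sym2 α)) : Set (Sym2 α)) ≤
      fromEdgeSet (T : Set (Sym2 α)) := fromEdgeSet_mono (by simp)
  have hPQ := (hac.subsingleton_path p q).elim ⟨P, hP⟩ ⟨Q.mapLe hle, hQ.mapLe hle⟩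
  have hfQ : f ∈ Q.edges := by
    rwa [← Q.edges_mapLe_eq_edges hle, ← show P = Q.mapLe hle from congrArg Subtype.val hPQ]
  simpa using Q.mem_of_mem_edges_fromEdgeSet hfQ

end SimpleGraph

namespace Finset

variable {α : Type*} [DecidableEq α] {P : Finset α} {e f : α}

theorem sum_add_ite_sub_ite (he : e ∈ P) (hf : f ∈ P) (x : α → ℝ) (ε : ℝ) :
    ∑ d ∈ P, (x d + (if d = e then ε else 0) - (if d = f then ε else 0)) =
      ∑ d ∈ P, x d := by
  rw [sum_sub_distrib, sum_add_distrib, sum_ite_eq', sum_ite_eq', if_pos he, if_pos hf]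
  ring

theorem sum_sq_add_ite_sub_ite (he : e ∈ P) (hf : f ∈ P) (hef : e ≠ f) (x : α → ℝ)
    (ε : ℝ) :
    ∑ d ∈ P, (x d + (if d = e then ε else 0) - (if d = f then ε else 0)) ^ 2 =
      ∑ d ∈ P, x d ^ 2 + 2 * ε * (x e - x f + ε) := by
  have hdiff : ∑ d ∈ P, ((x d + (if d = e then ε else 0) - (if d = f then ε else 0)) ^ 2
      - x d ^ 2) = 2 * ε * (x e - x f + ε) := by
    rw [sum_eq_add_of_mem e f he hf hef fun c _ hc => by simp [hc.1, hc.2]]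
    simp only [if_pos, if_neg hef, if_neg hef.symm]
    ring
  rw [← hdiff, sum_sub_distrib]
  ring

end Finset

section EdgeFinsets

variable {T : Finset (Sym2 V)} {W : Finset V}

theorem card_edgeFinset_induce_fromEdgeSet (hT : ∀ e ∈ T, ¬e.IsDiag) :
    #((fromEdgeSet (T : Set (Sym2 V))).induce (W : Set V)).edgeFinset =
      #(T.filter fun e => ∀ v ∈ e, v ∈ W) := by
  convert congrArg card (map_edgeFinset_induce (G := fromEdgeSet (T : Set (Sym2 V)))
    (s := (W : Set V))) using 1
  · rw [card_map]
    convert rfl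
  congr 1
  ext e
  simp only [mem_inter, mem_edgeFinset, edgeSet_fromEdgeSet, Set.mem_sdiff, mem_coe,
    Sym2.mem_diagSet, toFinset_coe, mem_sym2_iff, mem_filter]
  exact ⟨fun h => ⟨⟨h.1, hT e h.1⟩, h.2⟩, fun h => ⟨h.1.1, h.2⟩⟩

theorem card_filter_add_one_le_of_isAcyclic (hT : ∀ e ∈ T, ¬e.IsDiag)
    (hac : (fromEdgeSet (T : Set (Sym2 V))).IsAcyclic) (hW : W.Nonempty) :
    #(T.filter fun e => ∀ v ∈ e, v ∈ W) + 1 ≤ #W := by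
  have : Nonempty (W : Set V) := hW.to_subtype
  simpa [card_edgeFinset_induce_fromEdgeSet hT] using (hac.induce W).card_edgeFinset_add_one_le

theorem reachable_of_card_filter_add_one_eq (hT : ∀ e ∈ T, ¬e.IsDiag)
    (hac : (fromEdgeSet (T : Set (Sym2 V))).IsAcyclic)
    (hcard : #(T.filter fun e => ∀ v ∈ e, v ∈ W) + 1 = #W) :
    ∀ u ∈ W, ∀ v ∈ W,
      (fromEdgeSet ((T.filter fun e => ∀ v ∈ e, v ∈ W : Finset (Sym2 V)) :
        Set (Sym2 V))).Reachable u v := by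
  have htree := (hac.induce W).isTree_of_card_edgeFinset
    (by simpa [card_edgeFinset_induce_fromEdgeSet hT] using hcard)
  let toFilter : (fromEdgeSet (T : Set (Sym2 V))).induce W →g
      fromEdgeSet ((T.filter fun e => ∀ v ∈ e, v ∈ W : Finset (Sym2 V)) : Set (Sym2 V)) :=
    ⟨Subtype.val, fun {a b} hab => by
      simp only [comap_adj, Function.Embedding.subtype_apply, fromEdgeSet_adj, mem_coe,
        mem_filter, Sym2.forall_mem_pair] at hab ⊢
      exact ⟨⟨hab.1, a.2, b.2⟩, hab.2⟩⟩
  intro u hu v hv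
  exact (htree.connected.preconnected ⟨u, hu⟩ ⟨v, hv⟩).map toFilter

theorem card_le_card_filter_add_one_of_connected (hT : ∀ e ∈ T, ¬e.IsDiag)
    (hconn : ((fromEdgeSet (T : Set (Sym2 V))).induce W).Connected) :
    #W ≤ #(T.filter fun e => ∀ v ∈ e, v ∈ W) + 1 := by
  have := hconn.card_vert_le_card_edgeSet_add_one
  rw [Nat.card_eq_fintype_card, Nat.card_eq_fintype_card, ← edgeFinset_card] at this
  simpa [card_edgeFinset_induce_fromEdgeSet hT] using this

end EdgeFinsets

theorem inducedEdges_univ (G : SimpleGraph V) : inducedEdges G univ = G.edgeFinset :=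
  filter_true_of_mem fun _ _ v _ => mem_univ v

theorem inter_inducedEdges_eq_filter {G : SimpleGraph V} {T : Finset (Sym2 V)}
    (hT : (T : Set (Sym2 V)) ⊆ G.edgeSet) (W : Finset V) :
    T ∩ inducedEdges G W = T.filter fun e => ∀ v ∈ e, v ∈ W := by
  ext e
  simp only [inducedEdges, mem_inter, mem_filter, mem_edgeFinset]
  exact ⟨fun h => ⟨h.1, h.2.2⟩, fun h => ⟨h.1, hT h.1, h.2⟩⟩

theorem InH.one_lt_card {G : SimpleGraph V} {S : Finset V} (hS : InH G S) : 1 < #S := by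
  obtain ⟨e, he⟩ := hS.1
  induction e using Sym2.inductionOn with | hf a b => ?_
  simp only [inducedEdges, mem_filter, mem_edgeFinset, mem_edgeSet, Sym2.forall_mem_pair] at he
  exact Finset.one_lt_card.2 ⟨a, he.2.1, b, he.2.2, he.1.ne⟩

section SpanningTrees

variable {G : SimpleGraph V} {S : Finset V} {T : Finset (Sym2 V)}

theorem isSpanningTreeOn_of_card (hTG : (T : Set (Sym2 V)) ⊆ G.edgeSet)
    (hTS : ∀ e ∈ T, ∀ v ∈ e, v ∈ S) (hac : (fromEdgeSet (T : Set (Sym2 V))).IsAcyclic)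
    (hcard : #T + 1 = #S) : IsSpanningTreeOn G S T := by
  have hT : ∀ e ∈ T, ¬e.IsDiag := fun _ he => G.not_isDiag_of_mem_edgeSet (hTG he)
  have hfilter : (T.filter fun e => ∀ v ∈ e, v ∈ S) = T := filter_true_of_mem hTS
  refine ⟨hTG, hTS, hac, ?_⟩
  have := reachable_of_card_filter_add_one_eq hT hac (W := S) (by rwa [hfilter])
  rwa [hfilter] at this

theorem IsSpanningTreeOn.card_add_one [Nonempty V] (hT : IsSpanningTreeOn G univ T) :
    #T + 1 = Fintype.card V := by
  have htree : (fromEdgeSet (T : Set (Sym2 V))).IsTree :=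
    ⟨⟨fun u v => hT.2.2.2 u (mem_univ u) v (mem_univ v)⟩, hT.2.2.1⟩
  have hedges : (fromEdgeSet (T : Set (Sym2 V))).edgeFinset = T := by
    ext e
    simpa [edgeSet_fromEdgeSet] using fun he => G.not_isDiag_of_mem_edgeSet (hT.1 he)
  rw [← hedges]
  convert htree.card_edgeFinset

theorem IsSpanningTreeOn.insert_erase (hT : IsSpanningTreeOn G univ T) {p q : V}
    (hpq : G.Adj p q) {f : Sym2 V} (hf : f ∈ T)
    (hsep : ¬(fromEdgeSet ((T.erase f : Finset (Sym2 V)) : Set (Sym2 V))).Reachable p q) :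
    IsSpanningTreeOn G univ (insert s(p, q) (T.erase f)) := by
  have hpqT : s(p, q) ∉ T.erase f := fun h =>
    hsep ((fromEdgeSet_adj _).2 ⟨h, hpq.ne⟩).reachable
  have : Nonempty V := ⟨p⟩
  refine isSpanningTreeOn_of_card ?_ (by simp) ?_ ?_
  · intro e he
    rw [mem_coe, mem_insert] at he
    rcases he with rfl | he
    exacts [hpq, hT.1 (mem_of_mem_erase he)]
  · have hsplit : fromEdgeSet ((insert s(p, q) (T.erase f) : Finset (Sym2 V)) : Set (Sym2 V)) =
        fromEdgeSet ((T.erase f : Finset (Sym2 V)) : Set (Sym2 V)) ⊔ edge p q := by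
      rw [coe_insert, Set.insert_eq, fromEdgeSet_union, sup_comm, edge]
    rw [hsplit]
    exact (hT.2.2.1.anti (fromEdgeSet_mono (by simp))).sup_edge_of_not_reachable hsep
  · rw [card_insert_of_notMem hpqT, card_erase_of_mem hf, card_univ, ← hT.card_add_one]
    have := card_pos.2 ⟨f, hf⟩
    omega

theorem IsSpanningTreeOn.exists_exchange (hT : IsSpanningTreeOn G univ T) (A : Finset (Sym2 V))
    {p q : V} (hpq : G.Adj p q)
    (hA : ¬(fromEdgeSet ((T ∩ A : Finset (Sym2 V)) : Set (Sym2 V))).Reachable p q) :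
    ∃ f ∈ T, f ∉ A ∧ IsSpanningTreeOn G univ (insert s(p, q) (T.erase f)) := by
  obtain ⟨P, hP⟩ := (hT.2.2.2 p (mem_univ p) q (mem_univ q)).exists_isPath
  have hPT : ∀ e ∈ P.edges, e ∈ T := fun e he => P.mem_of_mem_edges_fromEdgeSet he
  obtain ⟨f, hfP, hfA⟩ : ∃ f ∈ P.edges, f ∉ A := by
    by_contra! hPA
    refine hA ⟨P.transfer _ fun e he => ?_⟩
    rw [edgeSet_fromEdgeSet, coe_inter]
    exact ⟨⟨hPT e he, hPA e he⟩,
      (fromEdgeSet _).not_isDiag_of_mem_edgeSet (P.edges_subset_edgeSet he)⟩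
  exact ⟨f, hPT f hfP, hfA,
    hT.insert_erase hpq (hPT f hfP) (hT.2.2.1.not_reachable_erase_of_mem_edges hP hfP)⟩

end SpanningTrees

namespace TreePMFOn

variable {G : SimpleGraph V} {S : Finset V}

def transfer (μ : TreePMFOn G S) (γ : Finset (Sym2 V)) {γ' : Finset (Sym2 V)}
    (hγ' : IsSpanningTreeOn G S γ') (ε : ℝ) (hε : 0 ≤ ε) (hεγ : ε ≤ μ.toFun γ) :
    TreePMFOn G S where
  toFun T := μ.toFun T + (if T = γ' then ε else 0) - (if T = γ then ε else 0)
  nonneg T := by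
    split_ifs with h1 h2 h2 <;> (try subst h2) <;> linarith [μ.nonneg T]
  supp T hT := by
    by_cases h' : T = γ'
    · exact h' ▸ hγ'
    refine μ.supp T fun h0 => hT ?_
    split_ifs with h
    · subst h; linarith
    · simp [h0]
  sum_one := by
    simp [sum_add_distrib, sum_sub_distrib, μ.sum_one]

theorem edgeProbOn_transfer (μ : TreePMFOn G S) (γ : Finset (Sym2 V)) {γ' : Finset (Sym2 V)}
    (hγ' : IsSpanningTreeOn G S γ') (ε : ℝ) (hε : 0 ≤ ε) (hεγ : ε ≤ μ.toFun γ)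
    (d : Sym2 V) :
    edgeProbOn (μ.transfer γ hγ' ε hε hεγ) d =
      edgeProbOn μ d + (if d ∈ γ' then ε else 0) - (if d ∈ γ then ε else 0) := by
  have hsplit : ∀ T : Finset (Sym2 V),
      (if d ∈ T then (μ.transfer γ hγ' ε hε hεγ).toFun T else 0) =
        (if d ∈ T then μ.toFun T else 0) + (if T = γ' then (if d ∈ γ' then ε else 0) else 0)
        - (if T = γ then (if d ∈ γ then ε else 0) else 0) := by
    intro T
    simp only [transfer]
    split_ifs <;> simp_all
  simp only [edgeProbOn, hsplit, sum_add_distrib, sum_sub_distrib, sum_ite_eq', mem_univ,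
    if_true]

end TreePMFOn

section EdgeProbabilities

variable {G : SimpleGraph V} {S : Finset V} (μ : TreePMFOn G S) {B : Finset (Sym2 V)} {c : ℝ}

theorem edgeProbOn_nonneg (e : Sym2 V) : 0 ≤ edgeProbOn μ e :=
  sum_nonneg fun T _ => by split_ifs <;> simp [μ.nonneg T]

theorem sum_edgeProbOn_eq :
    ∑ e ∈ B, edgeProbOn μ e = ∑ T, μ.toFun T * #(T ∩ B) := by
  simp only [edgeProbOn]
  rw [sum_comm]
  refine sum_congr rfl fun T _ => ?_
  rw [← sum_filter, filter_mem_eq_inter, sum_const, nsmul_eq_mul, mul_comm, inter_comm]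

theorem le_sum_edgeProbOn (h : ∀ T, μ.toFun T ≠ 0 → c ≤ #(T ∩ B)) :
    c ≤ ∑ e ∈ B, edgeProbOn μ e := by
  rw [sum_edgeProbOn_eq]
  calc c = ∑ T, μ.toFun T * c := by rw [← sum_mul, μ.sum_one, one_mul]
    _ ≤ ∑ T, μ.toFun T * #(T ∩ B) := sum_le_sum fun T _ => by
      by_cases hT : μ.toFun T = 0
      · simp [hT]
      · exact mul_le_mul_of_nonneg_left (h T hT) (μ.nonneg T)

theorem sum_edgeProbOn_le (h : ∀ T, μ.toFun T ≠ 0 → #(T ∩ B) ≤ c) :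
    ∑ e ∈ B, edgeProbOn μ e ≤ c := by
  rw [sum_edgeProbOn_eq]
  calc ∑ T, μ.toFun T * #(T ∩ B) ≤ ∑ T, μ.toFun T * c := sum_le_sum fun T _ => by
        by_cases hT : μ.toFun T = 0
        · simp [hT]
        · exact mul_le_mul_of_nonneg_left (h T hT) (μ.nonneg T)
    _ = c := by rw [← sum_mul, μ.sum_one, one_mul]

theorem card_inter_eq_of_sum_edgeProbOn_eq (h : ∀ T, μ.toFun T ≠ 0 → #(T ∩ B) ≤ c)
    (hsum : ∑ e ∈ B, edgeProbOn μ e = c) {T : Finset (Sym2 V)} (hT : μ.toFun T ≠ 0) :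
    #(T ∩ B) = c := by
  have hgap : ∑ T, μ.toFun T * (c - #(T ∩ B)) = 0 := by
    simp only [mul_sub, sum_sub_distrib, ← sum_mul, μ.sum_one, one_mul, ← sum_edgeProbOn_eq,
      hsum, sub_self]
  have hnonneg : ∀ T ∈ univ, 0 ≤ μ.toFun T * (c - #(T ∩ B)) := fun T _ => by
    by_cases hT : μ.toFun T = 0
    · simp [hT]
    · exact mul_nonneg (μ.nonneg T) (sub_nonneg.2 (h T hT))
  have := (sum_eq_zero_iff_of_nonneg hnonneg).1 hgap T (mem_univ T)
  rcases mul_eq_zero.1 this with h0 | h0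
  · exact absurd h0 hT
  · linarith

end EdgeProbabilities

section Fairness

variable {G : SimpleGraph V} {S : Finset V} {μ : TreePMFOn G S}

theorem IsFairOn.edgeProbOn_le_of_exchange (hfair : IsFairOn μ) {γ : Finset (Sym2 V)}
    (hγ : μ.toFun γ ≠ 0) {e f : Sym2 V} (he : e ∈ inducedEdges G S)
    (hf : f ∈ inducedEdges G S) (heγ : e ∉ γ) (hfγ : f ∈ γ)
    (hγ' : IsSpanningTreeOn G S (insert e (γ.erase f))) :
    edgeProbOn μ f ≤ edgeProbOn μ e := by
  by_contra! hlt
  have hef : e ≠ f := fun h => heγ (h ▸ hfγ)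
  set ε := min (μ.toFun γ) ((edgeProbOn μ f - edgeProbOn μ e) / 2)
  have hε : 0 < ε := lt_min ((μ.nonneg γ).lt_of_ne' hγ) (by linarith)
  set ν := μ.transfer γ hγ' ε hε.le (min_le_left _ _)
  have hν : ∀ d, edgeProbOn ν d = edgeProbOn μ d + (if d = e then ε else 0) -
      (if d = f then ε else 0) := by
    intro d
    rw [TreePMFOn.edgeProbOn_transfer]
    by_cases hde : d = e
    · subst hde; simp [heγ, hef]
    by_cases hdf : d = f
    · subst hdf; simp [hfγ, hef.symm]
    · simp [hde, hdf]
  have hm : (0 : ℝ) < #(inducedEdges G S) := by exact_mod_cast card_pos.2 ⟨e, he⟩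
  have hvar : edgeVarOn ν = edgeVarOn μ +
      2 * ε * (edgeProbOn μ e - edgeProbOn μ f + ε) / #(inducedEdges G S) := by
    simp only [edgeVarOn, hν, sum_add_ite_sub_ite he hf, sum_sq_add_ite_sub_ite he hf hef]
    ring
  have hgain := hfair ν
  rw [hvar, le_add_iff_nonneg_right, div_nonneg_iff] at hgain
  have : ε ≤ (edgeProbOn μ f - edgeProbOn μ e) / 2 := min_le_right _ _
  rcases hgain with ⟨h, -⟩ | ⟨-, h⟩ <;> nlinarith

end Fairness

section FairTrees

variable {G : SimpleGraph V} {μ : TreePMFOn G univ}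

theorem IsFairOn.reachable_inter_of_forall_lt (hfair : IsFairOn μ) {γ : Finset (Sym2 V)}
    (hγ : μ.toFun γ ≠ 0) {A : Finset (Sym2 V)} (hAG : A ⊆ G.edgeFinset)
    (hA : ∀ d ∈ A, ∀ g ∈ G.edgeFinset, g ∉ A → edgeProbOn μ d < edgeProbOn μ g)
    {p q : V} (hpq : s(p, q) ∈ A) :
    (fromEdgeSet ((γ ∩ A : Finset (Sym2 V)) : Set (Sym2 V))).Reachable p q := by
  by_contra hnr
  have hadj : G.Adj p q := mem_edgeFinset.1 (hAG hpq)
  have hpqγ : s(p, q) ∉ γ := fun h =>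
    hnr ((fromEdgeSet_adj _).2 ⟨mem_inter.2 ⟨h, hpq⟩, hadj.ne⟩).reachable
  obtain ⟨f, hfγ, hfA, htree⟩ := (μ.supp γ hγ).exists_exchange A hadj hnr
  have hfG : f ∈ G.edgeFinset := mem_edgeFinset.2 ((μ.supp γ hγ).1 hfγ)
  have hle := hfair.edgeProbOn_le_of_exchange hγ ((inducedEdges_univ G).symm ▸ hAG hpq)
    ((inducedEdges_univ G).symm ▸ hfG) hpqγ hfγ htree
  exact (hA _ hpq f hfG hfA).not_ge hle

theorem IsFairOn.connected_induce_setOf_reachable (hfair : IsFairOn μ) {γ : Finset (Sym2 V)}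
    (hγ : μ.toFun γ ≠ 0) {A : Finset (Sym2 V)} (hAG : A ⊆ G.edgeFinset)
    (hA : ∀ d ∈ A, ∀ g ∈ G.edgeFinset, g ∉ A → edgeProbOn μ d < edgeProbOn μ g)
    (u : V) :
    ((fromEdgeSet ((γ ∩ A : Finset (Sym2 V)) : Set (Sym2 V))).induce
      {v | (fromEdgeSet (A : Set (Sym2 V))).Reachable u v}).Connected := by
  have hsame : {v | (fromEdgeSet (A : Set (Sym2 V))).Reachable u v} =
      {v | (fromEdgeSet ((γ ∩ A : Finset (Sym2 V)) : Set (Sym2 V))).Reachable u v} := by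
    ext v
    refine ⟨Reachable.of_forall_adj fun p q hpq => ?_, fun hv => hv.mono (fromEdgeSet_mono ?_)⟩
    · exact hfair.reachable_inter_of_forall_lt hγ hAG hA ((fromEdgeSet_adj _).1 hpq).1
    · simp
  rw [hsame]
  exact SimpleGraph.connected_induce_setOf_reachable _ u

theorem inH_filter_reachable {G : SimpleGraph V} {A : Finset (Sym2 V)} (hAG : A ⊆ G.edgeFinset)
    {u w : V} (huw : s(u, w) ∈ A) :
    InH G (univ.filter fun v => (fromEdgeSet (A : Set (Sym2 V))).Reachable u v) := by
  have hadj : (fromEdgeSet (A : Set (Sym2 V))).Adj u w :=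
    (fromEdgeSet_adj _).2 ⟨huw, (mem_edgeFinset.1 (hAG huw)).ne⟩
  have hle : fromEdgeSet (A : Set (Sym2 V)) ≤ G :=
    (fromEdgeSet_le _).2 fun d hd => mem_edgeFinset.1 (hAG hd.1)
  have hset : ((univ.filter fun v => (fromEdgeSet (A : Set (Sym2 V))).Reachable u v : Finset V) :
      Set V) = {v | (fromEdgeSet (A : Set (Sym2 V))).Reachable u v} := by
    ext; simp
  refine ⟨⟨s(u, w), mem_filter.2 ⟨hAG huw, by simpa using hadj.reachable⟩⟩, ?_⟩
  rw [hset]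
  exact (connected_induce_setOf_reachable _ u).mono (comap_monotone _ hle)

theorem IsFairOn.exists_inH_card_sub_one_le (hfair : IsFairOn μ) {e : Sym2 V}
    (he : e ∈ G.edgeFinset) :
    ∃ W : Finset V, InH G W ∧ (#W : ℝ) - 1 ≤ edgeProbOn μ e * #(inducedEdges G W) := by
  induction e using Sym2.inductionOn with | hf u w => ?_
  set t := edgeProbOn μ s(u, w)
  set A := G.edgeFinset.filter fun d => edgeProbOn μ d ≤ t
  set W := univ.filter fun v => (fromEdgeSet (A : Set (Sym2 V))).Reachable u v
  have hWset : (W : Set V) = {v | (fromEdgeSet (A : Set (Sym2 V))).Reachable u v} := by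
    ext; simp [W]
  have hAG : A ⊆ G.edgeFinset := filter_subset _ _
  have hA : ∀ d ∈ A, ∀ g ∈ G.edgeFinset, g ∉ A → edgeProbOn μ d < edgeProbOn μ g :=
    fun d hd g hg hgA => by
      simp only [A, mem_filter, not_and, not_le] at hd hgA
      linarith [hgA hg]
  refine ⟨W, inH_filter_reachable hAG (mem_filter.2 ⟨he, le_rfl⟩), ?_⟩
  calc (#W : ℝ) - 1 ≤ ∑ d ∈ A.filter fun d => ∀ v ∈ d, v ∈ W, edgeProbOn μ d := by
        refine le_sum_edgeProbOn μ fun γ hγ => ?_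
        have := card_le_card_filter_add_one_of_connected
          (fun d hd => G.not_isDiag_of_mem_edgeSet ((μ.supp γ hγ).1 (mem_inter.1 hd).1))
          (hWset ▸ hfair.connected_induce_setOf_reachable hγ hAG hA u)
        rw [inter_filter, sub_le_iff_le_add]
        exact_mod_cast this
    _ ≤ ∑ d ∈ A.filter fun d => ∀ v ∈ d, v ∈ W, t :=
        sum_le_sum fun d hd => (mem_filter.1 (mem_filter.1 hd).1).2
    _ ≤ t * #(inducedEdges G W) := by
        rw [sum_const, nsmul_eq_mul, mul_comm]
        refine mul_le_mul_of_nonneg_left ?_ (edgeProbOn_nonneg μ _)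
        exact_mod_cast card_le_card fun d hd =>
          mem_filter.2 ⟨hAG (mem_filter.1 hd).1, (mem_filter.1 hd).2⟩

end FairTrees

section Densest

variable {G : SimpleGraph V} {S : Finset V} {μ : TreePMFOn G univ}

theorem IsDensest.card_sub_one_le_sum_edgeProbOn (hS : IsDensest G S) (hfair : IsFairOn μ) :
    (#S : ℝ) - 1 ≤ ∑ e ∈ inducedEdges G S, edgeProbOn μ e := by
  obtain ⟨e, heS, hmin⟩ := exists_min_image (inducedEdges G S) (edgeProbOn μ) hS.1.1
  obtain ⟨W, hW, hWe⟩ := hfair.exists_inH_card_sub_one_le (mem_filter.1 heS).1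
  have hdens := hS.2 W hW
  have hW1 : (1 : ℝ) < #W := by exact_mod_cast hW.one_lt_card
  have hS1 : (1 : ℝ) < #S := by exact_mod_cast hS.1.one_lt_card
  rw [density, density, div_le_div_iff₀ (by linarith) (by linarith)] at hdens
  have hmin_le :
      edgeProbOn μ e * #(inducedEdges G S) ≤ ∑ d ∈ inducedEdges G S, edgeProbOn μ d := by
    rw [mul_comm, ← nsmul_eq_mul]
    exact card_nsmul_le_sum _ _ _ hmin
  have hη := edgeProbOn_nonneg μ e
  suffices (#S : ℝ) - 1 ≤ edgeProbOn μ e * #(inducedEdges G S) by linarith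
  -- (|W| - 1)(|S| - 1) ≤ η(e) |E(W)| (|S| - 1) ≤ η(e) |E(S)| (|W| - 1)
  nlinarith [mul_le_mul_of_nonneg_right hWe (by linarith : (0 : ℝ) ≤ #S - 1),
    mul_le_mul_of_nonneg_left hdens hη]

theorem IsDensest.card_filter_add_one_eq (hS : IsDensest G S) (hfair : IsFairOn μ)
    {T : Finset (Sym2 V)} (hT : μ.toFun T ≠ 0) :
    #(T.filter fun e => ∀ v ∈ e, v ∈ S) + 1 = #S := by
  have hforest : ∀ γ, μ.toFun γ ≠ 0 → (#(γ ∩ inducedEdges G S) : ℝ) ≤ #S - 1 := by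
    intro γ hγ
    obtain ⟨hγG, -, hac, -⟩ := μ.supp γ hγ
    rw [inter_inducedEdges_eq_filter hγG, le_sub_iff_add_le]
    exact_mod_cast card_filter_add_one_le_of_isAcyclic
      (fun d hd => G.not_isDiag_of_mem_edgeSet (hγG hd)) hac
      (card_pos.1 (by have := hS.1.one_lt_card; omega))
  have hsum := le_antisymm (sum_edgeProbOn_le μ hforest)
    (hS.card_sub_one_le_sum_edgeProbOn hfair)
  have := card_inter_eq_of_sum_edgeProbOn_eq μ hforest hsum hT
  rw [inter_inducedEdges_eq_filter (μ.supp T hT).1] at this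
  have h1 := hS.1.one_lt_card
  exact_mod_cast (by linarith : (#(T.filter fun e => ∀ v ∈ e, v ∈ S) : ℝ) + 1 = #S)

end Densest

theorem restriction_property_of_minimalDensest_general
    {V : Type*} [Fintype V] [DecidableEq V] (G : SimpleGraph V)
    (S : Finset V) (hmin : IsMinimalDensest G S) :
    ∀ T : Finset (Sym2 V), IsFairTreeOn G Finset.univ T →
      IsSpanningTreeOn G S (T.filter fun e => ∀ v ∈ e, v ∈ S) := by
  rintro T ⟨μ, hfair, hT⟩
  obtain ⟨hTG, -, hac, -⟩ := μ.supp T hT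
  exact isSpanningTreeOn_of_card (fun e he => hTG (mem_filter.1 he).1)
    (fun e he => (mem_filter.1 he).2)
    (hac.anti (fromEdgeSet_mono (coe_subset.2 (filter_subset _ _))))
    (hmin.1.card_filter_add_one_eq hfair hT)

/-- If `H₀` (induced on `S`) is a minimal 1-densest subgraph of the finite
connected simple graph `G` with `H₀ ≠ G`, then `H₀` has the restriction property: for every
fair tree `γ` of `G`, the set of edges of `γ` joining two vertices of `H₀` is a spanning
tree of `H₀`. -/
theorem restriction_property_of_minimalDensest
    {V : Type*} [Fintype V] [DecidableEq V] (G : SimpleGraph V) (hG : G.Connected)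
    (S : Finset V) (hmin : IsMinimalDensest G S) (hne : S ≠ Finset.univ) :
    ∀ T : Finset (Sym2 V), IsFairTreeOn G Finset.univ T →
      IsSpanningTreeOn G S (T.filter fun e => ∀ v ∈ e, v ∈ S) :=
  restriction_property_of_minimalDensest_general G S hmin
end
end

section
/- For all integers m,n ≥ 1, every element of Γ̄ is a spanning tree of the grid graph L on {0,…,m}×{0,…,n}: for every choice function f assigning to each interior vertex v one of the two edges of E_v, the edge set B ∪ {f(v) : v interior} has exactly (m+1)(n+1) − 1 edges and its spanning subgraph is connected and acyclic. -/
open scoped Classical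

noncomputable section

/-- Vertices of the grid on `{0,…,m} × {0,…,n}`. -/
abbrev GridV (m n : ℕ) := Fin (m + 1) × Fin (n + 1)

/-- The grid graph on `{0,…,m} × {0,…,n}`: two vertices are adjacent iff they differ by 1
in exactly one coordinate. -/
def gridL (m n : ℕ) : SimpleGraph (GridV m n) :=
  SimpleGraph.fromRel fun v w =>
    (v.1 = w.1 ∧ v.2.val + 1 = w.2.val) ∨ (v.2 = w.2 ∧ v.1.val + 1 = w.1.val)

/-- The set `B` of boundary edges: the bottom-row edges together with the
right-column edges. -/
def boundaryB (m n : ℕ) : Finset (Sym2 (GridV m n)) :=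
  ((Finset.univ : Finset (Fin m)).image fun i =>
      s(((i.castSucc : Fin (m + 1)), (0 : Fin (n + 1))),
        ((i.succ : Fin (m + 1)), (0 : Fin (n + 1))))) ∪
    ((Finset.univ : Finset (Fin n)).image fun j =>
      s((Fin.last m, (j.castSucc : Fin (n + 1))),
        (Fin.last m, (j.succ : Fin (n + 1)))))

/-- A vertex `v = (i, j)` is interior if `j ≥ 1` and `i ≤ m - 1`. -/
def Interior (m n : ℕ) (v : GridV m n) : Prop := v.1.val < m ∧ 1 ≤ v.2.val

/-- The finset of interior vertices. -/
def interiorFinset (m n : ℕ) : Finset (GridV m n) :=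
  Finset.univ.filter fun v : GridV m n => v.1.val < m ∧ 1 ≤ v.2.val

/-- The edge to the right of `v` (for interior `v`, i.e. when `v.1 < m`). -/
def rightEdge (m n : ℕ) (v : GridV m n) : Sym2 (GridV m n) :=
  s(v, ((⟨min (v.1.val + 1) m, by omega⟩ : Fin (m + 1)), v.2))

/-- The edge below `v` (for interior `v`, i.e. when `v.2 ≥ 1`). -/
def belowEdge (m n : ℕ) (v : GridV m n) : Sym2 (GridV m n) :=
  s(v, (v.1, (⟨v.2.val - 1, lt_of_le_of_lt (Nat.sub_le _ _) v.2.isLt⟩ : Fin (n + 1))))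

/-- The pair `E_v` of candidate edges at an interior vertex `v`: the edge to the right of
`v` and the edge below `v`. -/
def Ev (m n : ℕ) (v : GridV m n) : Finset (Sym2 (GridV m n)) :=
  {rightEdge m n v, belowEdge m n v}

/-- The edge set `B ∪ {f(v) : v interior}` determined by a choice function `f`
(`f v = true` chooses the edge to the right of `v`, `f v = false` the edge below `v`). -/
def treeOf (m n : ℕ) (f : GridV m n → Bool) : Finset (Sym2 (GridV m n)) :=
  boundaryB m n ∪
    (interiorFinset m n).image fun v => if f v then rightEdge m n v else belowEdge m n v

/-- The collection `Γ̄` of all edge sets `B ∪ {f(v) : v interior}`. -/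
def GammaBar (m n : ℕ) : Finset (Finset (Sym2 (GridV m n))) :=
  (Finset.univ : Finset (GridV m n → Bool)).image (treeOf m n)

/-!
Root the grid at the corner `(m, 0)` and give every other vertex `v` a parent: its right
neighbour on the bottom row, its lower neighbour on the right column, and the other end of the
chosen edge `f(v)` at an interior vertex. Then `B ∪ {f(v)}` is exactly the set of edges
`{v, parent v}`, and the parent strictly decreases the distance `(m - i) + j` to the root. So
these edges are distinct (one per non-root vertex, giving `(m+1)(n+1) - 1` of them), every vertex
reaches the root by following parents, and a connected graph with one edge fewer than vertices
is a tree.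
-/

open Finset SimpleGraph

section ParentPointers

variable {V : Type*} [Fintype V] [DecidableEq V]

def parentEdges (p : V → V) (r : V) : Finset (Sym2 V) :=
  (univ.erase r).image fun v => s(v, p v)

variable {p : V → V} {r : V} {μ : V → ℕ}

lemma mem_parentEdges_of_ne {v : V} (hv : v ≠ r) : s(v, p v) ∈ parentEdges p r :=
  mem_image_of_mem _ (mem_erase.mpr ⟨hv, mem_univ v⟩)

lemma parentEdges_injOn (hμ : ∀ v ≠ r, μ (p v) < μ v) :
    Set.InjOn (fun v => s(v, p v)) ↑(univ.erase r) := by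
  intro v hv w hw h
  simp only [coe_erase, coe_univ, Set.mem_sdiff, Set.mem_univ, Set.mem_singleton_iff,
    true_and] at hv hw
  rcases Sym2.eq_iff.mp h with ⟨hvw, -⟩ | ⟨hvw, hwv⟩
  · exact hvw
  · have hv' := hμ v hv
    have hw' := hμ w hw
    rw [hwv] at hv'
    rw [← hvw] at hw'
    omega

lemma card_parentEdges (hμ : ∀ v ≠ r, μ (p v) < μ v) :
    #(parentEdges p r) = Fintype.card V - 1 := by
  rw [parentEdges, card_image_of_injOn (parentEdges_injOn hμ), card_erase_of_mem (mem_univ r),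
    card_univ]

lemma not_isDiag_of_mem_parentEdges (hμ : ∀ v ≠ r, μ (p v) < μ v) {e : Sym2 V}
    (he : e ∈ parentEdges p r) : ¬ e.IsDiag := by
  obtain ⟨v, hv, rfl⟩ := mem_image.mp he
  intro hdiag
  exact (hμ v (ne_of_mem_erase hv)).ne (congrArg μ (Sym2.mk_isDiag_iff.mp hdiag)).symm

lemma fromEdgeSet_parentEdges_adj (hμ : ∀ v ≠ r, μ (p v) < μ v) {v : V} (hv : v ≠ r) :
    (fromEdgeSet (parentEdges p r : Set (Sym2 V))).Adj v (p v) :=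
  (fromEdgeSet_adj _).mpr ⟨mem_parentEdges_of_ne hv, fun h => (hμ v hv).ne (h ▸ rfl)⟩

lemma parentEdges_subset_edgeSet {G : SimpleGraph V} (hadj : ∀ v ≠ r, G.Adj v (p v)) :
    (parentEdges p r : Set (Sym2 V)) ⊆ G.edgeSet := by
  rintro _ he
  obtain ⟨v, hv, rfl⟩ := mem_image.mp he
  exact hadj v (ne_of_mem_erase hv)

lemma fromEdgeSet_parentEdges_reachable_root (hμ : ∀ v ≠ r, μ (p v) < μ v) (v : V) :
    (fromEdgeSet (parentEdges p r : Set (Sym2 V))).Reachable v r := by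
  induction hk : μ v using Nat.strong_induction_on generalizing v with
  | _ k ih =>
    by_cases hv : v = r
    · exact hv ▸ Reachable.refl v
    · exact (fromEdgeSet_parentEdges_adj hμ hv).reachable.trans
        (ih _ (hk ▸ hμ v hv) _ rfl)

lemma fromEdgeSet_parentEdges_connected (hμ : ∀ v ≠ r, μ (p v) < μ v) :
    (fromEdgeSet (parentEdges p r : Set (Sym2 V))).Connected :=
  (connected_iff _).mpr ⟨fun u v => (fromEdgeSet_parentEdges_reachable_root hμ u).trans
    (fromEdgeSet_parentEdges_reachable_root hμ v).symm, ⟨r⟩⟩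

lemma fromEdgeSet_parentEdges_isTree (hμ : ∀ v ≠ r, μ (p v) < μ v) :
    (fromEdgeSet (parentEdges p r : Set (Sym2 V))).IsTree := by
  refine isTree_iff_connected_and_card.mpr ⟨fromEdgeSet_parentEdges_connected hμ, ?_⟩
  have hedges :
      (fromEdgeSet (parentEdges p r : Set (Sym2 V))).edgeSet = ↑(parentEdges p r) := by
    rw [edgeSet_fromEdgeSet, sdiff_eq_left, Set.disjoint_left]
    exact fun e he => not_isDiag_of_mem_parentEdges hμ he
  have : 0 < Fintype.card V := Fintype.card_pos_iff.mpr ⟨r⟩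
  rw [hedges, Nat.card_coe_set_eq, Set.ncard_coe_finset, card_parentEdges hμ,
    Nat.card_eq_fintype_card]
  omega

end ParentPointers

section Grid

variable {m n : ℕ}

def gridRoot (m n : ℕ) : GridV m n := (Fin.last m, 0)

def rightNeighbor (v : GridV m n) : GridV m n := (⟨min (v.1.val + 1) m, by omega⟩, v.2)

def belowNeighbor (v : GridV m n) : GridV m n :=
  (v.1, ⟨v.2.val - 1, lt_of_le_of_lt (Nat.sub_le _ _) v.2.isLt⟩)

def gridParent (f : GridV m n → Bool) (v : GridV m n) : GridV m n :=
  if v.2.val = 0 ∨ (v.1.val < m ∧ f v) then rightNeighbor v else belowNeighbor v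

def gridPotential (v : GridV m n) : ℕ := (m - v.1.val) + v.2.val

lemma ne_gridRoot_iff {v : GridV m n} : v ≠ gridRoot m n ↔ v.1.val < m ∨ v.2.val ≠ 0 := by
  have := v.1.isLt
  simp only [gridRoot, ne_eq, Prod.ext_iff, Fin.ext_iff, Fin.val_last, Fin.val_zero]
  omega

lemma gridParent_cases (f : GridV m n → Bool) {v : GridV m n} (hv : v ≠ gridRoot m n) :
    (v.1.val < m ∧ gridParent f v = rightNeighbor v) ∨
      (v.2.val ≠ 0 ∧ gridParent f v = belowNeighbor v) := by
  rw [ne_gridRoot_iff] at hv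
  unfold gridParent
  by_cases h : v.2.val = 0 ∨ (v.1.val < m ∧ f v)
  · left
    exact ⟨by omega, if_pos h⟩
  · right
    exact ⟨by omega, if_neg h⟩

lemma gridPotential_gridParent_lt (f : GridV m n → Bool) {v : GridV m n}
    (hv : v ≠ gridRoot m n) : gridPotential (gridParent f v) < gridPotential v := by
  rcases gridParent_cases f hv with ⟨h, hp⟩ | ⟨h, hp⟩ <;>
    simp only [hp, gridPotential, rightNeighbor, belowNeighbor] <;> omega

lemma gridL_adj_gridParent (f : GridV m n → Bool) {v : GridV m n} (hv : v ≠ gridRoot m n) :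
    (gridL m n).Adj v (gridParent f v) := by
  have := v.1.isLt
  have := v.2.isLt
  rcases gridParent_cases f hv with ⟨h, hp⟩ | ⟨h, hp⟩ <;>
    simp only [hp, gridL, fromRel_adj, rightNeighbor, belowNeighbor, ne_eq, Prod.ext_iff,
      Fin.ext_iff, true_and] <;> omega

lemma gridParent_of_snd_eq_zero (f : GridV m n → Bool) {v : GridV m n} (h : v.2.val = 0) :
    gridParent f v = rightNeighbor v :=
  if_pos (Or.inl h)

lemma gridParent_of_fst_eq_last (f : GridV m n → Bool) {v : GridV m n} (h₁ : v.1.val = m)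
    (h₂ : v.2.val ≠ 0) : gridParent f v = belowNeighbor v :=
  if_neg (by omega)

lemma gridParent_edge_of_interior (f : GridV m n → Bool) {v : GridV m n}
    (hv : v.1.val < m ∧ 1 ≤ v.2.val) :
    s(v, gridParent f v) = if f v then rightEdge m n v else belowEdge m n v := by
  unfold gridParent
  have : v.2.val ≠ 0 := by omega
  cases f v <;>
    simp only [this, hv.1, Bool.false_eq_true, and_false, and_self, or_self, or_true, ↓reduceIte]
  exacts [rfl, rfl]

lemma treeOf_eq_parentEdges (f : GridV m n → Bool) :
    treeOf m n f = parentEdges (gridParent f) (gridRoot m n) := by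
  ext e
  simp only [treeOf, boundaryB, parentEdges, interiorFinset, mem_union, mem_image, mem_filter,
    mem_univ, true_and, mem_erase, and_true]
  constructor
  · rintro ((⟨i, rfl⟩ | ⟨j, rfl⟩) | ⟨v, hv, rfl⟩)
    · refine ⟨(i.castSucc, 0), ne_gridRoot_iff.mpr (Or.inl i.isLt), ?_⟩
      rw [gridParent_of_snd_eq_zero f rfl]
      simp [rightNeighbor, Prod.ext_iff, Fin.ext_iff]
    · refine ⟨(Fin.last m, j.succ), ne_gridRoot_iff.mpr (Or.inr (Nat.succ_ne_zero j)), ?_⟩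
      rw [gridParent_of_fst_eq_last f rfl (Nat.succ_ne_zero j)]
      simp [belowNeighbor, Prod.ext_iff, Fin.ext_iff]
    · exact ⟨v, ne_gridRoot_iff.mpr (Or.inl hv.1), gridParent_edge_of_interior f hv⟩
  · rintro ⟨v, hv, rfl⟩
    by_cases hint : v.1.val < m ∧ 1 ≤ v.2.val
    · exact Or.inr ⟨v, hint, (gridParent_edge_of_interior f hint).symm⟩
    left
    rcases Nat.eq_zero_or_pos v.2.val with h₀ | hpos
    · have h₁ : v.1.val < m := by have := ne_gridRoot_iff.mp hv; omega
      refine Or.inl ⟨⟨v.1, h₁⟩, ?_⟩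
      rw [gridParent_of_snd_eq_zero f h₀]
      simp [rightNeighbor, Prod.ext_iff, Fin.ext_iff, h₀, h₁]
    · have h₁ : v.1.val = m := by have := v.1.isLt; omega
      refine Or.inr ⟨⟨v.2 - 1, by omega⟩, ?_⟩
      rw [gridParent_of_fst_eq_last f h₁ hpos.ne', Sym2.eq_swap]
      have : v.2.val - 1 + 1 = v.2.val := by omega
      simp [belowNeighbor, Prod.ext_iff, Fin.ext_iff, h₁, this]

end Grid

theorem treeOf_isSpanningTree_general (m n : ℕ)
    (f : GridV m n → Bool) :
    (treeOf m n f).card = (m + 1) * (n + 1) - 1 ∧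
    (↑(treeOf m n f) : Set (Sym2 (GridV m n))) ⊆ (gridL m n).edgeSet ∧
    (SimpleGraph.fromEdgeSet (↑(treeOf m n f) : Set (Sym2 (GridV m n)))).Connected ∧
    (SimpleGraph.fromEdgeSet (↑(treeOf m n f) : Set (Sym2 (GridV m n)))).IsAcyclic := by
  have hμ : ∀ v ≠ gridRoot m n, gridPotential (gridParent f v) < gridPotential v :=
    fun v hv => gridPotential_gridParent_lt f hv
  have htree := fromEdgeSet_parentEdges_isTree hμ
  rw [treeOf_eq_parentEdges]
  refine ⟨?_, ?_, htree.connected, htree.isAcyclic⟩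
  · rw [card_parentEdges hμ, Fintype.card_prod, Fintype.card_fin, Fintype.card_fin]
  · exact parentEdges_subset_edgeSet fun v hv => gridL_adj_gridParent f hv

/-- every element of `Γ̄` is a spanning tree of the grid graph `L` on
`{0,…,m}×{0,…,n}`: for every choice function `f`, the edge set `B ∪ {f(v) : v interior}`
has exactly `(m+1)(n+1) - 1` edges and its spanning subgraph is connected and acyclic. -/
theorem treeOf_isSpanningTree (m n : ℕ) (hm : 1 ≤ m) (hn : 1 ≤ n)
    (f : GridV m n → Bool) :
    (treeOf m n f).card = (m + 1) * (n + 1) - 1 ∧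
    (↑(treeOf m n f) : Set (Sym2 (GridV m n))) ⊆ (gridL m n).edgeSet ∧
    (SimpleGraph.fromEdgeSet (↑(treeOf m n f) : Set (Sym2 (GridV m n)))).Connected ∧
    (SimpleGraph.fromEdgeSet (↑(treeOf m n f) : Set (Sym2 (GridV m n)))).IsAcyclic :=
  treeOf_isSpanningTree_general m n f
end
end

section
/- For all integers m,n ≥ 1 and every edge e of the grid graph L on {0,…,m}×{0,…,n} with e ∉ B, exactly half of the elements of Γ̄ contain e, i.e., |{T ∈ Γ̄ : e ∈ T}| = 2^{mn−1}; equivalently, under the uniform pmf on Γ̄ the probability that a random tree contains e equals 1/2. Moreover every edge e ∈ B is contained in all elements of Γ̄. -/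
open scoped Classical

noncomputable section

section Aux
variable {m n : ℕ}

lemma mem_interior_iff {v : GridV m n} :
    v ∈ interiorFinset m n ↔ v.1.val < m ∧ 1 ≤ v.2.val := by
  simp [interiorFinset]

lemma rightEdge_not_mem_B {v : GridV m n} (hv1 : v.1.val < m) (hv2 : 1 ≤ v.2.val) :
    rightEdge m n v ∉ boundaryB m n := by
  intro h
  rw [boundaryB, Finset.mem_union] at h
  rcases h with h | h <;>
    simp only [Finset.mem_image, Finset.mem_univ, true_and] at h <;>
    obtain ⟨i, hi⟩ := h <;> rw [rightEdge, Sym2.eq_iff] at hi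
  · have : v.2.val = 0 := by
      rcases hi with ⟨h1, _⟩ | ⟨_, h1⟩ <;>
        simpa using (congrArg (fun p : GridV m n => p.2.val) h1).symm
    omega
  · have : v.1.val = m := by
      rcases hi with ⟨h1, _⟩ | ⟨_, h1⟩ <;>
        simpa using (congrArg (fun p : GridV m n => p.1.val) h1).symm
    omega

lemma belowEdge_not_mem_B {v : GridV m n} (hv1 : v.1.val < m) (hv2 : 1 ≤ v.2.val) :
    belowEdge m n v ∉ boundaryB m n := by
  intro h
  rw [boundaryB, Finset.mem_union] at h
  rcases h with h | h <;>
    simp only [Finset.mem_image, Finset.mem_univ, true_and] at h <;>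
    obtain ⟨i, hi⟩ := h <;> rw [belowEdge, Sym2.eq_iff] at hi
  · have : v.2.val = 0 := by
      rcases hi with ⟨h1, _⟩ | ⟨_, h1⟩ <;>
        simpa using (congrArg (fun p : GridV m n => p.2.val) h1).symm
    omega
  · have : v.1.val = m := by
      rcases hi with ⟨h1, _⟩ | ⟨_, h1⟩ <;>
        simpa using (congrArg (fun p : GridV m n => p.1.val) h1).symm
    omega

lemma rightEdge_inj {v w : GridV m n} (hv : v.1.val < m) (hw : w.1.val < m)
    (h : rightEdge m n v = rightEdge m n w) : v = w := by
  rw [rightEdge, rightEdge, Sym2.eq_iff] at h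
  rcases h with ⟨h1, _⟩ | ⟨h1, h2⟩
  · exact h1
  · have a1 := congrArg (fun p : GridV m n => p.1.val) h1
    have a2 := congrArg (fun p : GridV m n => p.1.val) h2
    simp at a1 a2
    omega

lemma belowEdge_inj {v w : GridV m n} (hv : 1 ≤ v.2.val) (hw : 1 ≤ w.2.val)
    (h : belowEdge m n v = belowEdge m n w) : v = w := by
  rw [belowEdge, belowEdge, Sym2.eq_iff] at h
  rcases h with ⟨h1, _⟩ | ⟨h1, h2⟩
  · exact h1
  · have a1 := congrArg (fun p : GridV m n => p.2.val) h1
    have a2 := congrArg (fun p : GridV m n => p.2.val) h2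
    simp at a1 a2
    omega

lemma rightEdge_ne_belowEdge {v w : GridV m n} (hv : v.1.val < m) :
    rightEdge m n v ≠ belowEdge m n w := by
  intro h
  rw [rightEdge, belowEdge, Sym2.eq_iff] at h
  rcases h with ⟨h1, h2⟩ | ⟨h1, h2⟩
  · have a1 := congrArg (fun p : GridV m n => p.1.val) h1
    have a2 := congrArg (fun p : GridV m n => p.1.val) h2
    simp at a1 a2
    omega
  · have a1 := congrArg (fun p : GridV m n => p.1.val) h1
    have a2 := congrArg (fun p : GridV m n => p.1.val) h2
    simp at a1 a2
    omega

lemma mem_treeOf_right {v : GridV m n} (hv1 : v.1.val < m) (hv2 : 1 ≤ v.2.val)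
    (f : GridV m n → Bool) : rightEdge m n v ∈ treeOf m n f ↔ f v = true := by
  rw [treeOf, Finset.mem_union]
  constructor
  · rintro (h | h)
    · exact absurd h (rightEdge_not_mem_B hv1 hv2)
    · simp only [Finset.mem_image] at h
      obtain ⟨w, hw, hw3⟩ := h
      rw [mem_interior_iff] at hw
      by_cases hfw : f w
      · rw [if_pos hfw] at hw3
        rw [← rightEdge_inj hw.1 hv1 hw3]; exact hfw
      · rw [if_neg hfw] at hw3
        exact absurd hw3.symm (rightEdge_ne_belowEdge hv1)
  · intro hf
    right
    exact Finset.mem_image.mpr ⟨v, mem_interior_iff.mpr ⟨hv1, hv2⟩, by rw [if_pos hf]⟩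

lemma mem_treeOf_below {v : GridV m n} (hv1 : v.1.val < m) (hv2 : 1 ≤ v.2.val)
    (f : GridV m n → Bool) : belowEdge m n v ∈ treeOf m n f ↔ f v = false := by
  rw [treeOf, Finset.mem_union]
  constructor
  · rintro (h | h)
    · exact absurd h (belowEdge_not_mem_B hv1 hv2)
    · simp only [Finset.mem_image] at h
      obtain ⟨w, hw, hw3⟩ := h
      rw [mem_interior_iff] at hw
      by_cases hfw : f w
      · rw [if_pos hfw] at hw3
        exact absurd hw3 (rightEdge_ne_belowEdge hw.1)
      · rw [if_neg hfw] at hw3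
        rw [← belowEdge_inj hw.2 hv2 hw3]
        simpa using hfw
  · intro hf
    right
    exact Finset.mem_image.mpr ⟨v, mem_interior_iff.mpr ⟨hv1, hv2⟩, by rw [if_neg (by simp [hf])]⟩

lemma treeOf_eq_iff (f g : GridV m n → Bool) :
    treeOf m n f = treeOf m n g ↔ ∀ v ∈ interiorFinset m n, f v = g v := by
  constructor
  · intro h v hv
    rw [mem_interior_iff] at hv
    cases hfv : f v with
    | true =>
      have := (mem_treeOf_right hv.1 hv.2 f).mpr hfv
      rw [h] at this
      exact ((mem_treeOf_right hv.1 hv.2 g).mp this).symm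
    | false =>
      have := (mem_treeOf_below hv.1 hv.2 f).mpr hfv
      rw [h] at this
      exact ((mem_treeOf_below hv.1 hv.2 g).mp this).symm
  · intro h
    unfold treeOf
    congr 1
    exact Finset.image_congr fun v hv => by rw [h v hv]

lemma card_interior : (interiorFinset m n).card = m * n := by
  have h1 : (Finset.univ.filter fun i : Fin (m+1) => i.val < m)
      = Finset.univ.erase (Fin.last m) := by
    ext i
    have := i.isLt
    simp only [Finset.mem_filter, Finset.mem_univ, true_and, Finset.mem_erase, Ne,
      Fin.ext_iff, Fin.val_last, and_true]
    omega
  have h2 : (Finset.univ.filter fun j : Fin (n+1) => 1 ≤ j.val)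
      = Finset.univ.erase (0 : Fin (n+1)) := by
    ext j
    simp only [Finset.mem_filter, Finset.mem_univ, true_and, Finset.mem_erase, Ne,
      Fin.ext_iff, Fin.val_zero, and_true]
    omega
  have h3 : interiorFinset m n
      = (Finset.univ.filter fun i : Fin (m+1) => i.val < m) ×ˢ
        (Finset.univ.filter fun j : Fin (n+1) => 1 ≤ j.val) := by
    ext v
    simp [interiorFinset, Finset.mem_product]
  rw [h3, Finset.card_product, h1, h2,
    Finset.card_erase_of_mem (Finset.mem_univ _),
    Finset.card_erase_of_mem (Finset.mem_univ _)]
  simp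

lemma card_filter_eq_half (α : Type*) [Fintype α] [DecidableEq α] (a : α) (b : Bool) :
    (Finset.univ.filter fun g : α → Bool => g a = b).card
      = 2 ^ (Fintype.card α - 1) := by
  classical
  set s := Finset.univ.filter fun g : α → Bool => g a = b with hs
  set t := Finset.univ.filter fun g : α → Bool => g a = !b with ht
  have hcard : s.card = t.card := by
    refine Finset.card_bij' (fun g _ => Function.update g a (!g a))
      (fun g _ => Function.update g a (!g a)) ?_ ?_ ?_ ?_
    · intro g hg
      simp only [hs, ht, Finset.mem_filter, Finset.mem_univ, true_and] at hg ⊢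
      simp [hg]
    · intro g hg
      simp only [hs, ht, Finset.mem_filter, Finset.mem_univ, true_and] at hg ⊢
      simp [hg]
    · intro g _
      simp [Function.update_idem]
    · intro g _
      simp [Function.update_idem]
  have hdisj : Disjoint s t := by
    rw [Finset.disjoint_left]
    intro g hg hg'
    simp only [hs, ht, Finset.mem_filter, Finset.mem_univ, true_and] at hg hg'
    rw [hg] at hg'
    exact (Bool.eq_not_self b).elim (by simp at hg')
  have hunion : s ∪ t = Finset.univ := by
    ext g
    simp only [hs, ht, Finset.mem_union, Finset.mem_filter, Finset.mem_univ, true_and,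
      iff_true]
    cases b <;> cases hga : g a <;> simp [hga]
  have htotal : s.card + t.card = 2 ^ Fintype.card α := by
    rw [← Finset.card_union_of_disjoint hdisj, hunion, Finset.card_univ]
    simp [Fintype.card_fun]
  have hpos : 1 ≤ Fintype.card α := Fintype.card_pos_iff.mpr ⟨a⟩
  have hpow : 2 ^ Fintype.card α = 2 * 2 ^ (Fintype.card α - 1) := by
    rw [← pow_succ']
    congr 1
    omega
  omega


lemma gv_ext {p q : GridV m n} (h1 : p.1.val = q.1.val) (h2 : p.2.val = q.2.val) : p = q := by
  cases p; cases q; simp_all [Prod.ext_iff, Fin.ext_iff]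

lemma classify_aux (a b : GridV m n)
    (hrel : (a.1 = b.1 ∧ a.2.val + 1 = b.2.val) ∨ (a.2 = b.2 ∧ a.1.val + 1 = b.1.val))
    (hB : s(a, b) ∉ boundaryB m n) :
    ∃ v ∈ interiorFinset m n, s(a, b) = rightEdge m n v ∨ s(a, b) = belowEdge m n v := by
  rcases hrel with ⟨h1, h2⟩ | ⟨h1, h2⟩
  · have h1' : a.1.val = b.1.val := congrArg Fin.val h1
    by_cases hm' : a.1.val = m
    · exfalso
      apply hB
      have hj : a.2.val < n := by have := b.2.isLt; omega
      rw [boundaryB, Finset.mem_union]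
      right
      simp only [Finset.mem_image, Finset.mem_univ, true_and]
      refine ⟨⟨a.2.val, hj⟩, ?_⟩
      have e1 : ((Fin.last m, ((⟨a.2.val, hj⟩ : Fin n).castSucc)) : GridV m n) = a :=
        gv_ext (by simp [hm']) (by simp)
      have e2 : ((Fin.last m, ((⟨a.2.val, hj⟩ : Fin n).succ)) : GridV m n) = b :=
        gv_ext (by simp; omega) (by simp; omega)
      rw [e1, e2]
    · refine ⟨b, mem_interior_iff.mpr ⟨?_, ?_⟩, Or.inr ?_⟩
      · have := a.1.isLt; omega
      · omega
      · rw [belowEdge, Sym2.eq_iff]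
        right
        refine ⟨?_, rfl⟩
        refine gv_ext h1' ?_
        show a.2.val = b.2.val - 1
        omega
  · have h1' : a.2.val = b.2.val := congrArg Fin.val h1
    by_cases hz : a.2.val = 0
    · exfalso
      apply hB
      have hi : a.1.val < m := by have := b.1.isLt; omega
      rw [boundaryB, Finset.mem_union]
      left
      simp only [Finset.mem_image, Finset.mem_univ, true_and]
      refine ⟨⟨a.1.val, hi⟩, ?_⟩
      have e1 : (((⟨a.1.val, hi⟩ : Fin m).castSucc, (0 : Fin (n + 1))) : GridV m n) = a :=
        gv_ext (by simp) (by simp [hz])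
      have e2 : (((⟨a.1.val, hi⟩ : Fin m).succ, (0 : Fin (n + 1))) : GridV m n) = b :=
        gv_ext (by simp; omega) (by simp; omega)
      rw [e1, e2]
    · refine ⟨a, mem_interior_iff.mpr ⟨?_, ?_⟩, Or.inl ?_⟩
      · have := b.1.isLt; omega
      · omega
      · rw [rightEdge, Sym2.eq_iff]
        left
        refine ⟨rfl, ?_⟩
        refine (gv_ext ?_ h1'.symm)
        show b.1.val = min (a.1.val + 1) m
        have := b.1.isLt
        omega

lemma classify (e : Sym2 (GridV m n)) (he : e ∈ (gridL m n).edgeFinset)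
    (hB : e ∉ boundaryB m n) :
    ∃ v ∈ interiorFinset m n, e = rightEdge m n v ∨ e = belowEdge m n v := by
  rw [SimpleGraph.mem_edgeFinset] at he
  revert he hB
  induction e using Sym2.ind with
  | _ a b =>
    intro he hB
    rw [SimpleGraph.mem_edgeSet, gridL, SimpleGraph.fromRel_adj] at he
    obtain ⟨hne, h | h⟩ := he
    · exact classify_aux a b h hB
    · obtain ⟨v, hv, h'⟩ := classify_aux b a h (by rwa [Sym2.eq_swap])
      exact ⟨v, hv, by rwa [Sym2.eq_swap]⟩

/-- Extension of a choice function on interior vertices to all vertices. -/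
def extFun (m n : ℕ) (g : ↥(interiorFinset m n) → Bool) : GridV m n → Bool :=
  fun v => if h : v ∈ interiorFinset m n then g ⟨v, h⟩ else false

lemma extFun_val (g : ↥(interiorFinset m n) → Bool) {v : GridV m n}
    (h : v ∈ interiorFinset m n) : extFun m n g v = g ⟨v, h⟩ := dif_pos h

lemma treeOf_extFun_injective :
    Function.Injective (fun g : ↥(interiorFinset m n) → Bool => treeOf m n (extFun m n g)) := by
  intro g1 g2 h
  funext x
  have := (treeOf_eq_iff _ _).mp h x.1 x.2
  rw [extFun_val g1 x.2, extFun_val g2 x.2] at this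
  simpa using this

lemma gammaBar_eq :
    GammaBar m n
      = Finset.univ.image (fun g : ↥(interiorFinset m n) → Bool => treeOf m n (extFun m n g)) := by
  ext T
  simp only [GammaBar, Finset.mem_image, Finset.mem_univ, true_and]
  constructor
  · rintro ⟨f, rfl⟩
    refine ⟨fun x => f x.1, ?_⟩
    apply (treeOf_eq_iff _ _).mpr
    intro v hv
    rw [extFun_val _ hv]
  · rintro ⟨g, rfl⟩
    exact ⟨extFun m n g, rfl⟩

lemma card_interior_subtype :
    Fintype.card ↥(interiorFinset m n) = m * n := by
  rw [Fintype.card_coe, card_interior]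

lemma card_gammaBar : (GammaBar m n).card = 2 ^ (m * n) := by
  rw [gammaBar_eq, Finset.card_image_of_injective _ treeOf_extFun_injective, Finset.card_univ,
    Fintype.card_fun, card_interior_subtype, Fintype.card_bool]

end Aux

/-- every non-boundary edge `e` of the grid graph `L` lies in exactly half of
the elements of `Γ̄` (so the uniform pmf on `Γ̄` gives it probability `1/2`), and every
boundary edge lies in all elements of `Γ̄`. -/
theorem gammaBar_edge_probabilities (m n : ℕ) (hm : 1 ≤ m) (hn : 1 ≤ n) :
    (∀ e ∈ (gridL m n).edgeFinset, e ∉ boundaryB m n →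
      ((GammaBar m n).filter fun T => e ∈ T).card = 2 ^ (m * n - 1) ∧
      (((GammaBar m n).filter fun T => e ∈ T).card : ℝ) / ((GammaBar m n).card : ℝ)
        = 1 / 2) ∧
    ∀ e ∈ boundaryB m n, ∀ T ∈ GammaBar m n, e ∈ T := by
  have hmn : 1 ≤ m * n := Nat.mul_le_mul hm hn
  constructor
  · intro e he heB
    obtain ⟨v₀, hv₀, hcase⟩ := classify e he heB
    obtain ⟨b₀, hb₀⟩ : ∃ b₀ : Bool, ∀ f, e ∈ treeOf m n f ↔ f v₀ = b₀ := by
      have hv₀' := mem_interior_iff.mp hv₀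
      rcases hcase with h | h
      · exact ⟨true, fun f => h ▸ mem_treeOf_right hv₀'.1 hv₀'.2 f⟩
      · exact ⟨false, fun f => h ▸ mem_treeOf_below hv₀'.1 hv₀'.2 f⟩
    have hfilter : ((GammaBar m n).filter fun T => e ∈ T)
        = (Finset.univ.filter
            fun g : ↥(interiorFinset m n) → Bool => g ⟨v₀, hv₀⟩ = b₀).image
          (fun g => treeOf m n (extFun m n g)) := by
      rw [gammaBar_eq, Finset.filter_image]
      congr 1
      ext g
      simp only [Finset.mem_filter, Finset.mem_univ, true_and]
      rw [hb₀, extFun_val g hv₀]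
    have hcount : ((GammaBar m n).filter fun T => e ∈ T).card = 2 ^ (m * n - 1) := by
      rw [hfilter, Finset.card_image_of_injective _ treeOf_extFun_injective]
      have hh := card_filter_eq_half (↥(interiorFinset m n)) ⟨v₀, hv₀⟩ b₀
      rw [card_interior_subtype] at hh
      convert hh using 2
    refine ⟨hcount, ?_⟩
    rw [hcount, card_gammaBar]
    have hmn' : m * n = (m * n - 1) + 1 := by omega
    rw [hmn', pow_succ]
    push_cast
    rw [div_eq_div_iff (by positivity) (by norm_num)]
    ring
  · intro e heB T hT
    rw [GammaBar, Finset.mem_image] at hT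
    obtain ⟨f, _, rfl⟩ := hT
    exact Finset.mem_union_left _ heB
end
end
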